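/- Let d ≥ 1 and let Δ be a simplicial complex of dimension at most d−1 (i.e., Δ has no face with more than d vertices) on n' vertices, where n' > 4d. Then the number of minimal non-faces of Δ is at least 3(n')²/(8d). -/

import Mathlib

open Finset

/-- A simplicial complex on a finite vertex set: a collection of finite subsets
(faces) of the vertex set, closed under inclusion, containing every singleton. -/
structure SC (α : Type*) [DecidableEq α] where
  verts : Finset α
  faces : Finset (Finset α)
  subset_verts : ∀ F ∈ faces, F ⊆ verts
  down_closed : ∀ F ∈ faces, ∀ G, G ⊆ F → G ∈ faces
  singleton_mem : ∀ v ∈ verts, {v} ∈ faces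

namespace SC

variable {α : Type*} [DecidableEq α]

/-- `dimP1 K = dim K + 1`: the maximal number of vertices of a face. -/
def dimP1 (K : SC α) : ℕ := K.faces.sup Finset.card

/-- The number of faces with exactly `j` vertices, i.e. `f_{j-1}(K)`. -/
def fCard (K : SC α) (j : ℕ) : ℕ := (K.faces.filter (fun F => F.card = j)).card

/-- The minimal non-faces of `K`: subsets of the vertex set which are not faces,
all of whose proper subsets are faces. -/
def minNonFaces (K : SC α) : Finset (Finset α) :=
  K.verts.powerset.filter (fun F => F ∉ K.faces ∧ ∀ G ∈ F.powerset, G ≠ F → G ∈ K.faces)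

/-- The `i`-th minimal Taylor shift `m̃_i(K)`: the minimal number of vertices covered by
a set of exactly `i` minimal non-faces of `K`. -/
noncomputable def mT (K : SC α) (i : ℕ) : ℕ :=
  sInf {n | ∃ T ⊆ K.minNonFaces, T.card = i ∧ (T.sup id).card = n}

/-- The `i`-th maximal Taylor shift `M̃_i(K)`: the maximal number of vertices covered by
a set of exactly `i` minimal non-faces of `K`. -/
noncomputable def MT (K : SC α) (i : ℕ) : ℕ :=
  sSup {n | ∃ T ⊆ K.minNonFaces, T.card = i ∧ (T.sup id).card = n}

/-- The conjectured Taylor upper bound `(∏_{i=1}^{n-d} M̃_i(K))/(n-d)!` on `f_{d-1}(K)`. -/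
noncomputable def taylorUBval (K : SC α) : ℚ :=
  (∏ i ∈ Finset.Icc 1 (K.verts.card - K.dimP1), (K.MT i : ℚ)) /
    (Nat.factorial (K.verts.card - K.dimP1))

/-- The conjectured Taylor lower bound `(∏_{i=1}^{n-d} m̃_i(K))/(n-d)!` on `f_{d-1}(K)`. -/
noncomputable def taylorLBval (K : SC α) : ℚ :=
  (∏ i ∈ Finset.Icc 1 (K.verts.card - K.dimP1), (K.mT i : ℚ)) /
    (Nat.factorial (K.verts.card - K.dimP1))

/-- `K` satisfies the Taylor upper bound: `f_{d-1}(K) ≤ (∏_{i=1}^{n-d} M̃_i(K))/(n-d)!`. -/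
def TaylorUB (K : SC α) : Prop := (K.fCard K.dimP1 : ℚ) ≤ K.taylorUBval

/-- `K` satisfies the Taylor lower bound: `f_{d-1}(K) ≥ (∏_{i=1}^{n-d} m̃_i(K))/(n-d)!`. -/
def TaylorLB (K : SC α) : Prop := K.taylorLBval ≤ (K.fCard K.dimP1 : ℚ)

/-- The induced subcomplex `K[W]`: the faces of `K` contained in `W`. -/
def induced (K : SC α) (W : Finset α) : SC α where
  verts := K.verts ∩ W
  faces := K.faces.filter (fun F => F ⊆ W)
  subset_verts := by
    intro F hF
    simp only [mem_filter] at hF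
    exact subset_inter (K.subset_verts F hF.1) hF.2
  down_closed := by
    intro F hF G hG
    simp only [mem_filter] at hF ⊢
    exact ⟨K.down_closed F hF.1 G hG, hG.trans hF.2⟩
  singleton_mem := by
    intro v hv
    simp only [mem_inter] at hv
    simp only [mem_filter, singleton_subset_iff]
    exact ⟨K.singleton_mem v hv.1, hv.2⟩

end SC

/-! Take a face `F` of maximum size `k`, so `1 ≤ k ≤ d`. For every vertex `v ∉ F` the non-face
`F ∪ {v}` contains a minimal non-face through `v`; these are distinct for distinct `v` and meet
`F`. The minimal non-faces avoiding `F` include those of the induced complex on the other `n - k`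
vertices. Hence `μ(n) ≥ (n - k) + μ(n - k)` for the number `μ` of minimal non-faces, and by
induction `2d μ(n) ≥ n (n - d)`, because `(n - k) (n - k + d) - n (n - d) = (d - k) (2n - k) ≥ 0`.
For `n ≥ 4d` this is at least `3n² / 4`. -/

namespace SC

variable {α : Type*} [DecidableEq α] (K : SC α)

lemma mem_minNonFaces {G : Finset α} :
    G ∈ K.minNonFaces ↔ G ⊆ K.verts ∧ G ∉ K.faces ∧ ∀ H ⊆ G, H ≠ G → H ∈ K.faces := by
  simp [minNonFaces]

lemma exists_minNonFaces_subset {G : Finset α} (hGV : G ⊆ K.verts) (hG : G ∉ K.faces) :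
    ∃ N ∈ K.minNonFaces, N ⊆ G := by
  obtain ⟨N, hN, hNmin⟩ := (G.powerset.filter (· ∉ K.faces)).exists_min_image card
    ⟨G, by simp [hG]⟩
  simp only [mem_filter, mem_powerset] at hN hNmin
  refine ⟨N, K.mem_minNonFaces.2 ⟨hN.1.trans hGV, hN.2, fun H hHN hne => ?_⟩, hN.1⟩
  by_contra hH
  have := card_lt_card (Finset.ssubset_iff_subset_ne.2 ⟨hHN, hne⟩)
  have := hNmin H ⟨hHN.trans hN.1, hH⟩
  omega

lemma minNonFaces_induced_subset (W : Finset α) :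
    (K.induced W).minNonFaces ⊆ K.minNonFaces.filter (· ⊆ W) := by
  intro G hG
  obtain ⟨hGV, hG, hGmin⟩ := (K.induced W).mem_minNonFaces.1 hG
  have hGW : G ⊆ W := hGV.trans inter_subset_right
  refine mem_filter.2 ⟨K.mem_minNonFaces.2 ⟨hGV.trans inter_subset_left, ?_, ?_⟩, hGW⟩
  · exact fun h => hG (mem_filter.2 ⟨h, hGW⟩)
  · exact fun H hH hne => (mem_filter.1 (hGmin H hH hne)).1

lemma card_verts_sdiff_le_of_maximal {F : Finset α} (hF : F ∈ K.faces)
    (hmax : ∀ v ∈ K.verts \ F, insert v F ∉ K.faces) :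
    (K.verts \ F).card ≤ (K.minNonFaces.filter (¬ · ⊆ K.verts \ F)).card := by
  have hN : ∀ v ∈ K.verts \ F,
      ∃ N ∈ K.minNonFaces, N ⊆ insert v F ∧ v ∈ N ∧ ¬ N ⊆ K.verts \ F := by
    intro v hv
    obtain ⟨hvV, hvF⟩ := mem_sdiff.1 hv
    obtain ⟨N, hNmin, hNsub⟩ := K.exists_minNonFaces_subset
      (insert_subset hvV (K.subset_verts F hF)) (hmax v hv)
    have hN_not_le_face : ∀ G ∈ K.faces, ¬ N ⊆ G := fun G hG hNG =>
      (K.mem_minNonFaces.1 hNmin).2.1 (K.down_closed G hG N hNG)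
    refine ⟨N, hNmin, hNsub, ?_, fun hNW => ?_⟩
    · by_contra hvN
      exact hN_not_le_face F hF ((subset_insert_iff_of_notMem hvN).1 hNsub)
    · refine hN_not_le_face {v} (K.singleton_mem v hvV) (subset_singleton_iff'.2 fun b hb => ?_)
      exact (mem_insert.1 (hNsub hb)).resolve_right (mem_sdiff.1 (hNW hb)).2
  choose! N hN using hN
  refine card_le_card_of_injOn N (fun v hv => mem_filter.2 ⟨(hN v hv).1, (hN v hv).2.2.2⟩) ?_
  intro v hv w hw hvw
  have hwv : w ∈ insert v F := (hN v hv).2.1 (hvw ▸ (hN w hw).2.2.1)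
  exact ((mem_insert.1 hwv).resolve_right (mem_sdiff.1 hw).2).symm

lemma card_verts_sdiff_add_card_minNonFaces_induced_le {F : Finset α} (hF : F ∈ K.faces)
    (hmax : ∀ v ∈ K.verts \ F, insert v F ∉ K.faces) :
    (K.verts \ F).card + (K.induced (K.verts \ F)).minNonFaces.card ≤ K.minNonFaces.card := by
  have hout := K.card_verts_sdiff_le_of_maximal hF hmax
  have hin := card_le_card (K.minNonFaces_induced_subset (K.verts \ F))
  have := K.minNonFaces.card_filter_add_card_filter_not (· ⊆ K.verts \ F)
  omega

theorem card_mul_sub_le_card_minNonFaces {d : ℕ} (hdim : ∀ F ∈ K.faces, F.card ≤ d) :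
    (K.verts.card : ℤ) * (K.verts.card - d) ≤ 2 * d * K.minNonFaces.card := by
  induction hn : K.verts.card using Nat.strong_induction_on generalizing K with
  | _ n ih =>
  obtain hV | ⟨v, hv⟩ := K.verts.eq_empty_or_nonempty
  · simp only [← hn, hV, card_empty, CharP.cast_eq_zero, zero_mul]
    positivity
  obtain ⟨F, hF, hFmax⟩ := K.faces.exists_max_image card ⟨{v}, K.singleton_mem v hv⟩
  have hk : 1 ≤ F.card := by simpa using hFmax {v} (K.singleton_mem v hv)
  have hkn : F.card ≤ n := hn ▸ card_le_card (K.subset_verts F hF)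
  have hmax : ∀ w ∈ K.verts \ F, insert w F ∉ K.faces := fun w hw h => by
    have := hFmax _ h
    rw [card_insert_of_notMem (mem_sdiff.1 hw).2] at this
    omega
  have hW : (K.verts \ F).card = n - F.card := by
    rw [card_sdiff_of_subset (K.subset_verts F hF), hn]
  have hrest := ih (n - F.card) (by omega) (K.induced (K.verts \ F))
    (fun G hG => hdim G (mem_filter.1 hG).1)
    (by rw [← hW]; exact congrArg card (inter_eq_right.2 sdiff_subset))
  have hstep := K.card_verts_sdiff_add_card_minNonFaces_induced_le hF hmax
  rw [hW] at hstep
  have hkd : (F.card : ℤ) ≤ d := by exact_mod_cast hdim F hF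
  push_cast [hkn] at hrest
  zify [hkn] at hstep
  nlinarith [mul_nonneg (sub_nonneg.2 hkd) (by omega : (0 : ℤ) ≤ 2 * n - F.card)]

end SC

open SC in
/-- A simplicial complex of dimension at most `d-1` on `n' > 4d` vertices has at least
`3(n')²/(8d)` minimal non-faces. -/
theorem minNonFaces_card_lower_bound {α : Type*} [DecidableEq α] (Δ : SC α) (d n' : ℕ)
    (hd : 1 ≤ d) (hdim : ∀ F ∈ Δ.faces, F.card ≤ d)
    (hn : Δ.verts.card = n') (h4 : 4 * d < n') :
    (3 * (n' : ℚ) ^ 2) / (8 * d) ≤ (Δ.minNonFaces.card : ℚ) := by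
  have hbound : (n' : ℚ) * (n' - d) ≤ 2 * d * Δ.minNonFaces.card := by
    exact_mod_cast hn ▸ Δ.card_mul_sub_le_card_minNonFaces hdim
  have hd' : (0 : ℚ) < d := by exact_mod_cast hd
  have h4' : (4 * d : ℚ) < n' := by exact_mod_cast h4
  rw [div_le_iff₀ (by positivity)]
  nlinarith [mul_nonneg (by positivity : (0 : ℚ) ≤ n') (sub_nonneg.2 h4'.le)]
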